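/- arXiv:2510.12365 — 2 statements merged into one kernel-verified Lean document; each statement's English description precedes it below -/
import Mathlib

section
/- For any y > 0, the value H₊⁻¹(y) of the inverse of H(x) = 1 - x + x·log x on (1,∞) satisfies H₊⁻¹(y) = exp(W₀((y-1)/e) + 1), where W₀ is the principal branch of the Lambert W function; i.e., the number x = exp(W₀((y-1)/e) + 1) satisfies x > 1 and 1 - x + x·log x = y. -/
open Real

/-- For `y > 0`, if `w = W₀((y-1)/e)` (i.e. `w·e^w = (y-1)/e` and `w ≥ -1`, characterizing the
principal branch of the Lambert W function), then `x = exp(w + 1)` satisfies `x > 1` and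
`H(x) = 1 - x + x·log x = y`; that is, `H₊⁻¹(y) = exp(W₀((y-1)/e) + 1)`. -/
theorem inverse_entropy_plus_eq_exp_lambertW (y w : ℝ) (hy : 0 < y)
    (hw : w * Real.exp w = (y - 1) / Real.exp 1) (hw' : -1 ≤ w) :
    1 < Real.exp (w + 1) ∧
      1 - Real.exp (w + 1) + Real.exp (w + 1) * Real.log (Real.exp (w + 1)) = y := by
  have he : (0:ℝ) < Real.exp 1 := Real.exp_pos 1
  have key : w * Real.exp w * Real.exp 1 = y - 1 := by
    field_simp at hw; linarith
  have hne : w ≠ -1 := by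
    intro h
    rw [h] at key
    have : Real.exp (-1) * Real.exp 1 = 1 := by
      rw [← Real.exp_add]; simp
    nlinarith
  have hwgt : -1 < w := lt_of_le_of_ne hw' (Ne.symm hne)
  constructor
  · have : (0:ℝ) < w + 1 := by linarith
    calc (1:ℝ) = Real.exp 0 := by simp
    _ < Real.exp (w + 1) := Real.exp_lt_exp.mpr this
  · rw [Real.log_exp, Real.exp_add]
    nlinarith
end

section
/- For any y ∈ (0, 1), the number x = exp(W₋₁((y-1)/e) + 1) satisfies 0 < x < 1 and 1 - x + x·log x = y, where W₋₁ is the lower branch of the Lambert W function. -/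
open Real

/-- For `y ∈ (0,1)`, if `w = W₋₁((y-1)/e)` (i.e. `w·e^w = (y-1)/e` and `w ≤ -1`, characterizing
the lower branch of the Lambert W function), then `x = exp(w + 1)` satisfies `0 < x < 1` and
`1 - x + x·log x = y`. -/
theorem inverse_entropy_minus_eq_exp_lambertWm1 (y w : ℝ) (hy0 : 0 < y) (hy1 : y < 1)
    (hw : w * Real.exp w = (y - 1) / Real.exp 1) (hw' : w ≤ -1) :
    0 < Real.exp (w + 1) ∧ Real.exp (w + 1) < 1 ∧
      1 - Real.exp (w + 1) + Real.exp (w + 1) * Real.log (Real.exp (w + 1)) = y := by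
  have he : (0:ℝ) < Real.exp 1 := Real.exp_pos 1
  have hxw : Real.exp (w + 1) * w = y - 1 := by
    have : Real.exp (w + 1) = Real.exp w * Real.exp 1 := by
      rw [Real.exp_add]
    rw [this]
    field_simp at hw ⊢
    linarith [hw]
  have hwlt : w < -1 := by
    rcases lt_or_eq_of_le hw' with h | h
    · exact h
    · exfalso
      rw [h] at hxw
      simp at hxw
      have : Real.exp 0 = 1 := Real.exp_zero
      nlinarith [Real.exp_pos (0:ℝ)]
  refine ⟨Real.exp_pos _, ?_, ?_⟩
  · have : w + 1 < 0 := by linarith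
    calc Real.exp (w + 1) < Real.exp 0 := Real.exp_lt_exp.mpr this
    _ = 1 := Real.exp_zero
  · rw [Real.log_exp]
    nlinarith [hxw]
end
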